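/- (Proposition in Section IV-B: almost-sure consistency of the instrumental-variable matrices.) Let (v(t))_{t∈ℕ} and (ṽ(t))_{t∈ℕ} be random vectors in ℝⁿ whose scalar components, taken jointly over both families, all times, and all coordinates, form a mutually independent family, each distributed N(0, σ²). Assume there exist C_u, C_x such that ‖u(t)‖ ≤ C_u and ‖xᵒ(t)‖ ≤ C_x for all t. For each T ≥ 1 form U₀(T), X₀ᵒ(T), X₁ᵒ(T), V₀(T), V₁(T), Ṽ₀(T) whose columns are u(0),…,u(T−1); xᵒ(0),…,xᵒ(T−1); xᵒ(1),…,xᵒ(T); v(0),…,v(T−1); v(1),…,v(T); ṽ(0),…,ṽ(T−1), respectively. Set X₀(T) := X₀ᵒ(T) + V₀(T), X₁(T) := X₁ᵒ(T) + V₁(T), X₀ⁱᵛ(T) := X₀ᵒ(T) + Ṽ₀(T), Φⁱᵛ(T) := [U₀(T); X₀ⁱᵛ(T)], Φᵒ(T) := [U₀(T); X₀ᵒ(T)], X̄₀ⁱᵛ(T) := (1/T)·X₀(T)·(Φⁱᵛ(T))ᵀ, X̄₁ⁱᵛ(T) := (1/T)·X₁(T)·(Φⁱᵛ(T))ᵀ,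 X̄₀ᵒ(T) := (1/T)·X₀ᵒ(T)·(Φᵒ(T))ᵀ, X̄₁ᵒ(T) := (1/T)·X₁ᵒ(T)·(Φᵒ(T))ᵀ. Then, almost surely, X̄₀ⁱᵛ(T) − X̄₀ᵒ(T) → 0 and X̄₁ⁱᵛ(T) − X̄₁ᵒ(T) → 0 as T → ∞. -/

import Mathlib

/-!
Entrywise, `X̄ⁱᵛ(T) - X̄ᵒ(T)` is a sum of empirical cross-correlations `T⁻¹ ∑_{t<T} a_t b_t` in
which at least one factor is noise: a bounded input or state against `v` or `ṽ`, or `v` against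
the independent `ṽ`. Each such sequence `Y_t = a_t b_t` is centred, has second and fourth
moments bounded by some `B` and `C`, and `Y_T` is independent of `Y_0 + ⋯ + Y_{T-1}`, since the
two are built from disjoint sets of independent Gaussian coordinates. Expanding the fourth power
then gives `E[(Y_0 + ⋯ + Y_{T-1})⁴] ≤ (3B² + C) T²`, so `∑_T E[(T⁻¹ ∑_{t<T} Y_t)⁴] < ∞`. Hence
`(T⁻¹ ∑_{t<T} Y_t)⁴` is almost surely summable, and in particular tends to `0`.
-/

open Matrix MeasureTheory ProbabilityTheory Filter

/-- The matrix whose `T` columns are `f 0, …, f (T-1)`. -/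
noncomputable def colMat {d : ℕ} (f : ℕ → Fin d → ℝ) (T : ℕ) : Matrix (Fin d) (Fin T) ℝ :=
  Matrix.of fun i t => f t i

open Finset Function
open scoped Topology ENNReal

lemma tendsto_zero_of_tendsto_pow_zero {α : Type*} {l : Filter α} {x : α → ℝ} {N : ℕ}
    (hN : N ≠ 0) (h : Tendsto (fun a => x a ^ N) l (𝓝 0)) : Tendsto x l (𝓝 0) := by
  have h' : Tendsto (fun a => |x a ^ N| ^ (N⁻¹ : ℝ)) l (𝓝 0) := by
    simpa [Real.zero_rpow (inv_ne_zero (Nat.cast_ne_zero.2 hN))] using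
      h.abs.rpow_const (p := (N⁻¹ : ℝ)) (Or.inr (by positivity))
  refine (tendsto_zero_iff_abs_tendsto_zero _).2 (h'.congr fun a => ?_)
  rw [abs_pow, Real.pow_rpow_inv_natCast (abs_nonneg _) hN]
  rfl

lemma Filter.Tendsto.matrix_fromCols {α R : Type*} [TopologicalSpace R] {l : Filter α}
    {d e m : Type*} {A : α → Matrix d e R} {B : α → Matrix d m R} {A₀ : Matrix d e R}
    {B₀ : Matrix d m R} (hA : Tendsto A l (𝓝 A₀)) (hB : Tendsto B l (𝓝 B₀)) :
    Tendsto (fun x => fromCols (A x) (B x)) l (𝓝 (fromCols A₀ B₀)) := by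
  refine tendsto_pi_nhds.2 fun i => tendsto_pi_nhds.2 fun j => ?_
  rcases j with j | k
  · exact tendsto_pi_nhds.1 (tendsto_pi_nhds.1 hA i) j
  · exact tendsto_pi_nhds.1 (tendsto_pi_nhds.1 hB i) k

noncomputable def empCorr {d e : ℕ} (f : ℕ → Fin d → ℝ) (g : ℕ → Fin e → ℝ) (T : ℕ) :
    Matrix (Fin d) (Fin e) ℝ :=
  (T : ℝ)⁻¹ • (colMat f T * (colMat g T)ᵀ)

lemma empCorr_apply {d e : ℕ} (f : ℕ → Fin d → ℝ) (g : ℕ → Fin e → ℝ) (T : ℕ) (i : Fin d)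
    (k : Fin e) : empCorr f g T i k = (T : ℝ)⁻¹ * ∑ t ∈ range T, f t i * g t k := by
  simp [empCorr, colMat, Matrix.mul_apply, Fin.sum_univ_eq_sum_range (fun t => f t i * g t k)]

lemma tendsto_empCorr_zero {d e : ℕ} {f : ℕ → Fin d → ℝ} {g : ℕ → Fin e → ℝ}
    (h : ∀ i k, Tendsto (fun T : ℕ => (T : ℝ)⁻¹ * ∑ t ∈ range T, f t i * g t k) atTop (𝓝 0)) :
    Tendsto (empCorr f g) atTop (𝓝 0) :=
  tendsto_pi_nhds.2 fun i => tendsto_pi_nhds.2 fun k => by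
    simpa only [empCorr_apply, Matrix.zero_apply] using h i k

lemma smul_colMat_mul_fromRows_sub {d e m : ℕ} (a w : ℕ → Fin d → ℝ) (b z : ℕ → Fin e → ℝ)
    (u : ℕ → Fin m → ℝ) (T : ℕ) :
    (T : ℝ)⁻¹ • (colMat (fun t => a t + w t) T
        * (fromRows (colMat u T) (colMat (fun t => b t + z t) T))ᵀ)
      - (T : ℝ)⁻¹ • (colMat a T * (fromRows (colMat u T) (colMat b T))ᵀ)
      = fromCols (empCorr w u T) (empCorr a z T + empCorr w b T + empCorr w z T) := by
  ext i (j | k) <;>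
  simp only [empCorr, colMat, Matrix.sub_apply, Matrix.add_apply, Matrix.smul_apply,
    Matrix.mul_apply, Matrix.transpose_apply, fromRows_apply_inl, fromRows_apply_inr,
    fromCols_apply_inl, fromCols_apply_inr, of_apply, Pi.add_apply, smul_eq_mul, add_mul, mul_add,
    sum_add_distrib] <;>
  ring

section Probability

variable {Ω : Type*} [MeasurableSpace Ω] {μ : Measure Ω}

lemma MeasureTheory.MemLp.integrable_pow_of_le [IsFiniteMeasure μ] {X : Ω → ℝ} {N k : ℕ}
    (hX : MemLp X N μ) (hk : k ≤ N) : Integrable (fun ω => X ω ^ k) μ := by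
  refine (integrable_norm_iff (hX.aestronglyMeasurable.pow k)).1 ?_
  simpa [norm_pow] using
    (hX.mono_exponent (p := k) (by exact_mod_cast hk)).integrable_norm_pow'

lemma MeasureTheory.memLp_of_integrable_pow {X : Ω → ℝ} {N : ℕ} (hN : N ≠ 0)
    (hX : AEStronglyMeasurable X μ) (h : Integrable (fun ω => X ω ^ N) μ) : MemLp X N μ := by
  rw [← integrable_norm_rpow_iff hX (by exact_mod_cast hN) (ENNReal.natCast_ne_top N)]
  simpa [norm_pow] using h.norm

lemma ProbabilityTheory.IndepFun.integral_add_pow [IsFiniteMeasure μ] {X Y : Ω → ℝ} {N : ℕ}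
    (hXY : IndepFun X Y μ) (hX : MemLp X N μ) (hY : MemLp Y N μ) :
    ∫ ω, (X ω + Y ω) ^ N ∂μ
      = ∑ k ∈ range (N + 1), (∫ ω, X ω ^ k ∂μ) * (∫ ω, Y ω ^ (N - k) ∂μ) * N.choose k := by
  have hpow (k : ℕ) : IndepFun (fun ω => X ω ^ k) (fun ω => Y ω ^ (N - k)) μ :=
    hXY.comp (measurable_id.pow_const k) (measurable_id.pow_const (N - k))
  simp_rw [add_pow]
  rw [integral_finsetSum]
  · refine sum_congr rfl fun k _ => ?_
    rw [integral_mul_const, (hpow k).integral_fun_mul_eq_mul_integral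
      (hX.aestronglyMeasurable.pow k) (hY.aestronglyMeasurable.pow (N - k))]
  · intro k hk
    exact ((hpow k).integrable_mul (hX.integrable_pow_of_le (mem_range_succ_iff.1 hk))
      (hY.integrable_pow_of_le (Nat.sub_le N k))).mul_const _

lemma ae_tendsto_zero_of_summable_integral {Z : ℕ → Ω → ℝ} (hZ0 : ∀ T ω, 0 ≤ Z T ω)
    (hZ : ∀ T, Integrable (Z T) μ) (hsum : Summable fun T => ∫ ω, Z T ω ∂μ) :
    ∀ᵐ ω ∂μ, Tendsto (fun T => Z T ω) atTop (𝓝 0) := by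
  have hmeas (T : ℕ) : AEMeasurable (fun ω => ENNReal.ofReal (Z T ω)) μ :=
    (hZ T).aemeasurable.ennreal_ofReal
  have hfin : ∫⁻ ω, ∑' T, ENNReal.ofReal (Z T ω) ∂μ ≠ ∞ := by
    rw [lintegral_tsum hmeas]
    simp_rw [← ofReal_integral_eq_lintegral_ofReal (hZ _) (ae_of_all _ (hZ0 _))]
    exact hsum.tsum_ofReal_ne_top
  filter_upwards [ae_lt_top' (AEMeasurable.tsum hmeas) hfin] with ω hω
  have := ENNReal.summable_toReal hω.ne
  simp only [ENNReal.toReal_ofReal (hZ0 _ ω)] at this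
  exact this.tendsto_atTop_zero

lemma indepFun_sum_range_of_disjoint {ι : Type*} {W : ι → Ω → ℝ} (hW : iIndepFun W μ)
    (hWm : ∀ p, Measurable (W p)) {A : ℕ → Finset ι} (hA : Pairwise (Disjoint on A))
    {φ : ∀ t, (A t → ℝ) → ℝ} (hφ : ∀ t, Measurable (φ t)) (T : ℕ) :
    IndepFun (fun ω => ∑ t ∈ range T, φ t fun p => W p ω) (fun ω => φ T fun p => W p ω) μ := by
  classical
  set S : Finset ι := (range T).biUnion A
  have hST : Disjoint S (A T) :=
    (disjoint_biUnion_left _ _ _).2 fun t ht => hA (mem_range.1 ht).ne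
  let Φ : (S → ℝ) → ℝ := fun h => ∑ t ∈ (range T).attach,
    φ t fun p => h ⟨p, mem_biUnion.2 ⟨t, t.2, p.2⟩⟩
  have hΦ : Measurable Φ := Finset.measurable_sum _ fun t _ =>
    (hφ t).comp (measurable_pi_lambda _ fun p => measurable_pi_apply _)
  have key := (hW.indepFun_finset S (A T) hST hWm).comp hΦ (hφ T)
  convert key using 1
  · funext ω
    exact (sum_attach (range T) fun t => φ t fun p => W p ω).symm
  · rfl

variable [IsProbabilityMeasure μ]

lemma ProbabilityTheory.IndepFun.integral_add_sq {X Y : Ω → ℝ} (hXY : IndepFun X Y μ)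
    (hX : MemLp X 2 μ) (hY : MemLp Y 2 μ) (hY0 : ∫ ω, Y ω ∂μ = 0) :
    ∫ ω, (X ω + Y ω) ^ 2 ∂μ = ∫ ω, X ω ^ 2 ∂μ + ∫ ω, Y ω ^ 2 ∂μ := by
  rw [hXY.integral_add_pow (N := 2) (by exact_mod_cast hX) (by exact_mod_cast hY)]
  simp [sum_range_succ, hY0]
  ring

lemma ProbabilityTheory.IndepFun.integral_add_pow_four {X Y : Ω → ℝ} (hXY : IndepFun X Y μ)
    (hX : MemLp X 4 μ) (hY : MemLp Y 4 μ) (hX0 : ∫ ω, X ω ∂μ = 0) (hY0 : ∫ ω, Y ω ∂μ = 0) :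
    ∫ ω, (X ω + Y ω) ^ 4 ∂μ
      = ∫ ω, X ω ^ 4 ∂μ + 6 * (∫ ω, X ω ^ 2 ∂μ) * (∫ ω, Y ω ^ 2 ∂μ) + ∫ ω, Y ω ^ 4 ∂μ := by
  rw [hXY.integral_add_pow (N := 4) (by exact_mod_cast hX) (by exact_mod_cast hY)]
  simp [sum_range_succ, hX0, hY0, Nat.choose]
  ring

lemma integral_sum_range_pow_four_le {Y : ℕ → Ω → ℝ} (hY : ∀ t, MemLp (Y t) 4 μ)
    (hind : ∀ T, IndepFun (fun ω => ∑ t ∈ range T, Y t ω) (Y T) μ)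
    (hmean : ∀ t, ∫ ω, Y t ω ∂μ = 0) {B C : ℝ} (hB : ∀ t, ∫ ω, Y t ω ^ 2 ∂μ ≤ B)
    (hC : ∀ t, ∫ ω, Y t ω ^ 4 ∂μ ≤ C) (T : ℕ) :
    ∫ ω, (∑ t ∈ range T, Y t ω) ^ 4 ∂μ ≤ (3 * B ^ 2 + C) * T ^ 2 := by
  have hS (T : ℕ) : MemLp (fun ω => ∑ t ∈ range T, Y t ω) 4 μ :=
    memLp_finsetSum _ fun t _ => hY t
  have hSmean (T : ℕ) : ∫ ω, ∑ t ∈ range T, Y t ω ∂μ = 0 := by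
    rw [integral_finsetSum _ fun t _ => (hY t).integrable (by norm_num)]
    exact sum_eq_zero fun t _ => hmean t
  have hB0 : 0 ≤ B := (integral_nonneg fun ω => by positivity).trans (hB 0)
  have hsq (T : ℕ) : ∫ ω, (∑ t ∈ range T, Y t ω) ^ 2 ∂μ ≤ B * T := by
    induction T with
    | zero => simp
    | succ T ih =>
      simp only [sum_range_succ]
      rw [(hind T).integral_add_sq ((hS T).mono_exponent (by norm_num))
        ((hY T).mono_exponent (by norm_num)) (hmean T)]
      push_cast
      linarith [hB T]
  induction T with
  | zero => simp
  | succ T ih =>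
    have hcross : (∫ ω, (∑ t ∈ range T, Y t ω) ^ 2 ∂μ) * (∫ ω, Y T ω ^ 2 ∂μ) ≤ (B * T) * B :=
      mul_le_mul (hsq T) (hB T) (integral_nonneg fun ω => by positivity) (by positivity)
    simp only [sum_range_succ]
    rw [(hind T).integral_add_pow_four (hS T) (hY T) (hSmean T) (hmean T)]
    push_cast
    nlinarith [hC T, (integral_nonneg fun ω => by positivity).trans (hC 0)]

theorem ae_tendsto_avg_zero_of_fourth_moment {Y : ℕ → Ω → ℝ} (hY : ∀ t, MemLp (Y t) 4 μ)
    (hind : ∀ T, IndepFun (fun ω => ∑ t ∈ range T, Y t ω) (Y T) μ)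
    (hmean : ∀ t, ∫ ω, Y t ω ∂μ = 0) {B C : ℝ} (hB : ∀ t, ∫ ω, Y t ω ^ 2 ∂μ ≤ B)
    (hC : ∀ t, ∫ ω, Y t ω ^ 4 ∂μ ≤ C) :
    ∀ᵐ ω ∂μ, Tendsto (fun T : ℕ => (T : ℝ)⁻¹ * ∑ t ∈ range T, Y t ω) atTop (𝓝 0) := by
  have hint (T : ℕ) : Integrable (fun ω => ((T : ℝ)⁻¹ * ∑ t ∈ range T, Y t ω) ^ 4) μ :=
    (memLp_finsetSum _ fun t _ => hY t).const_mul _ |>.integrable_pow_of_le (N := 4) le_rfl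
  have hbound (T : ℕ) : ∫ ω, ((T : ℝ)⁻¹ * ∑ t ∈ range T, Y t ω) ^ 4 ∂μ
      ≤ (3 * B ^ 2 + C) * (1 / (T : ℝ) ^ 2) := by
    simp_rw [mul_pow, integral_const_mul]
    rcases T.eq_zero_or_pos with rfl | hT
    · simp -- both sides vanish at `T = 0` because `(0 : ℝ)⁻¹ = 0`
    · calc ((T : ℝ)⁻¹) ^ 4 * ∫ ω, (∑ t ∈ range T, Y t ω) ^ 4 ∂μ
          ≤ ((T : ℝ)⁻¹) ^ 4 * ((3 * B ^ 2 + C) * T ^ 2) := by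
            gcongr
            exact integral_sum_range_pow_four_le hY hind hmean hB hC T
        _ = (3 * B ^ 2 + C) * (1 / (T : ℝ) ^ 2) := by field_simp
  have hsum : Summable fun T : ℕ => ∫ ω, ((T : ℝ)⁻¹ * ∑ t ∈ range T, Y t ω) ^ 4 ∂μ :=
    .of_nonneg_of_le (fun T => integral_nonneg fun ω => by positivity) hbound
      ((Real.summable_one_div_nat_pow.2 one_lt_two).mul_left _)
  filter_upwards [ae_tendsto_zero_of_summable_integral (fun T ω => by positivity) hint hsum]
    with ω hω
  exact tendsto_zero_of_tendsto_pow_zero four_ne_zero hω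

lemma ae_tendsto_avg_const_mul_of_iIndepFun {ι : Type*} {W : ι → Ω → ℝ} (hW : iIndepFun W μ)
    (hWm : ∀ p, Measurable (W p)) (hW4 : ∀ p, MemLp (W p) 4 μ) (hW0 : ∀ p, ∫ ω, W p ω ∂μ = 0)
    {B C : ℝ} (hB : ∀ p, ∫ ω, W p ω ^ 2 ∂μ ≤ B) (hC : ∀ p, ∫ ω, W p ω ^ 4 ∂μ ≤ C)
    {g : ℕ → ι} (hg : g.Injective) {c : ℕ → ℝ} {M : ℝ} (hc : ∀ t, |c t| ≤ M) :
    ∀ᵐ ω ∂μ, Tendsto (fun T : ℕ => (T : ℝ)⁻¹ * ∑ t ∈ range T, c t * W (g t) ω) atTop (𝓝 0) := by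
  have hcpow (t k : ℕ) (hk : Even k) : c t ^ k ≤ M ^ k := by
    rw [← hk.pow_abs]
    exact pow_le_pow_left₀ (abs_nonneg _) (hc t) k
  refine ae_tendsto_avg_zero_of_fourth_moment (Y := fun t ω => c t * W (g t) ω)
    (B := M ^ 2 * B) (C := M ^ 4 * C) (fun t => (hW4 (g t)).const_mul (c t)) ?_
    (fun t => by simp [integral_const_mul, hW0]) (fun t => ?_) (fun t => ?_)
  · exact indepFun_sum_range_of_disjoint hW hWm (A := fun t => {g t})
      (fun s t hst => disjoint_singleton.2 (hg.ne hst))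
      (φ := fun t h => c t * h ⟨g t, mem_singleton_self _⟩)
      (fun t => (measurable_pi_apply _).const_mul _)
  · simp_rw [mul_pow, integral_const_mul]
    exact mul_le_mul (hcpow t 2 even_two) (hB _) (integral_nonneg fun ω => by positivity)
      (by positivity)
  · simp_rw [mul_pow, integral_const_mul]
    exact mul_le_mul (hcpow t 4 (by decide)) (hC _) (integral_nonneg fun ω => by positivity)
      (by positivity)

lemma ae_tendsto_avg_mul_of_iIndepFun {ι : Type*} {W : ι → Ω → ℝ} (hW : iIndepFun W μ)
    (hWm : ∀ p, Measurable (W p)) (hW4 : ∀ p, MemLp (W p) 4 μ) (hW0 : ∀ p, ∫ ω, W p ω ∂μ = 0)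
    {B C : ℝ} (hB : ∀ p, ∫ ω, W p ω ^ 2 ∂μ ≤ B) (hC : ∀ p, ∫ ω, W p ω ^ 4 ∂μ ≤ C)
    {g₁ g₂ : ℕ → ι} (hg₁ : g₁.Injective) (hg₂ : g₂.Injective) (hg : ∀ s t, g₁ s ≠ g₂ t) :
    ∀ᵐ ω ∂μ, Tendsto (fun T : ℕ => (T : ℝ)⁻¹ * ∑ t ∈ range T, W (g₁ t) ω * W (g₂ t) ω)
      atTop (𝓝 0) := by
  classical
  have hpair (t k : ℕ) : IndepFun (fun ω => W (g₁ t) ω ^ k) (fun ω => W (g₂ t) ω ^ k) μ :=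
    (hW.indepFun (hg t t)).comp (measurable_id.pow_const k) (measurable_id.pow_const k)
  have hmoment (t k : ℕ) : ∫ ω, (W (g₁ t) ω * W (g₂ t) ω) ^ k ∂μ
      = (∫ ω, W (g₁ t) ω ^ k ∂μ) * ∫ ω, W (g₂ t) ω ^ k ∂μ := by
    simp_rw [mul_pow]
    exact (hpair t k).integral_fun_mul_eq_mul_integral
      ((hWm _).pow_const k).aestronglyMeasurable ((hWm _).pow_const k).aestronglyMeasurable
  have hprod_le {k : ℕ} {D : ℝ} (hD : ∀ p, ∫ ω, W p ω ^ k ∂μ ≤ D) (hk : Even k) (t : ℕ) :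
      ∫ ω, (W (g₁ t) ω * W (g₂ t) ω) ^ k ∂μ ≤ D * D := by
    have hnn (p : ι) : 0 ≤ ∫ ω, W p ω ^ k ∂μ := integral_nonneg fun ω => hk.pow_nonneg _
    rw [hmoment]
    exact mul_le_mul (hD _) (hD _) (hnn _) ((hnn (g₁ t)).trans (hD _))
  refine ae_tendsto_avg_zero_of_fourth_moment (Y := fun t ω => W (g₁ t) ω * W (g₂ t) ω)
    (fun t => ?_) ?_ (fun t => by simpa [hW0] using hmoment t 1)
    (hprod_le hB even_two) (hprod_le hC (by decide))
  · refine memLp_of_integrable_pow (N := 4) four_ne_zero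
      ((hWm _).mul (hWm _)).aestronglyMeasurable ?_
    simp_rw [mul_pow]
    exact (hpair t 4).integrable_mul ((hW4 _).integrable_pow_of_le (N := 4) le_rfl)
      ((hW4 _).integrable_pow_of_le (N := 4) le_rfl)
  · refine indepFun_sum_range_of_disjoint hW hWm (A := fun t => {g₁ t, g₂ t}) ?_
      (φ := fun t h => h ⟨g₁ t, by simp⟩ * h ⟨g₂ t, by simp⟩)
      (fun t => by fun_prop)
    intro s t hst
    simp only [Function.onFun, disjoint_insert_left, disjoint_insert_right, mem_insert,
      mem_singleton, disjoint_singleton, not_or]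
    exact ⟨⟨hg₁.ne hst.symm, hg t s⟩, hg s t, hg₂.ne hst⟩

lemma ae_tendsto_empCorr_left_of_iIndepFun {ι : Type*} {W : ι → Ω → ℝ} (hW : iIndepFun W μ)
    (hWm : ∀ p, Measurable (W p)) (hW4 : ∀ p, MemLp (W p) 4 μ) (hW0 : ∀ p, ∫ ω, W p ω ∂μ = 0)
    {B C : ℝ} (hB : ∀ p, ∫ ω, W p ω ^ 2 ∂μ ≤ B) (hC : ∀ p, ∫ ω, W p ω ^ 4 ∂μ ≤ C)
    {d e : ℕ} {g : Fin d → ℕ → ι} (hg : ∀ i, (g i).Injective) {c : ℕ → Fin e → ℝ} {M : ℝ}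
    (hc : ∀ t, ‖c t‖ ≤ M) :
    ∀ᵐ ω ∂μ, Tendsto (empCorr (fun t i => W (g i t) ω) c) atTop (𝓝 0) := by
  have h : ∀ᵐ ω ∂μ, ∀ i k,
      Tendsto (fun T : ℕ => (T : ℝ)⁻¹ * ∑ t ∈ range T, c t k * W (g i t) ω) atTop (𝓝 0) := by
    simp only [ae_all_iff]
    exact fun i k => ae_tendsto_avg_const_mul_of_iIndepFun hW hWm hW4 hW0 hB hC (hg i)
      fun t => (norm_le_pi_norm (c t) k).trans (hc t)
  filter_upwards [h] with ω hω
  exact tendsto_empCorr_zero fun i k => by simpa only [mul_comm] using hω i k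

lemma ae_tendsto_empCorr_right_of_iIndepFun {ι : Type*} {W : ι → Ω → ℝ} (hW : iIndepFun W μ)
    (hWm : ∀ p, Measurable (W p)) (hW4 : ∀ p, MemLp (W p) 4 μ) (hW0 : ∀ p, ∫ ω, W p ω ∂μ = 0)
    {B C : ℝ} (hB : ∀ p, ∫ ω, W p ω ^ 2 ∂μ ≤ B) (hC : ∀ p, ∫ ω, W p ω ^ 4 ∂μ ≤ C)
    {d e : ℕ} {g : Fin e → ℕ → ι} (hg : ∀ k, (g k).Injective) {c : ℕ → Fin d → ℝ} {M : ℝ}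
    (hc : ∀ t, ‖c t‖ ≤ M) :
    ∀ᵐ ω ∂μ, Tendsto (empCorr c (fun t k => W (g k t) ω)) atTop (𝓝 0) := by
  have h : ∀ᵐ ω ∂μ, ∀ i k,
      Tendsto (fun T : ℕ => (T : ℝ)⁻¹ * ∑ t ∈ range T, c t i * W (g k t) ω) atTop (𝓝 0) := by
    simp only [ae_all_iff]
    exact fun i k => ae_tendsto_avg_const_mul_of_iIndepFun hW hWm hW4 hW0 hB hC (hg k)
      fun t => (norm_le_pi_norm (c t) i).trans (hc t)
  filter_upwards [h] with ω hω
  exact tendsto_empCorr_zero hω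

lemma ae_tendsto_empCorr_of_iIndepFun {ι : Type*} {W : ι → Ω → ℝ} (hW : iIndepFun W μ)
    (hWm : ∀ p, Measurable (W p)) (hW4 : ∀ p, MemLp (W p) 4 μ) (hW0 : ∀ p, ∫ ω, W p ω ∂μ = 0)
    {B C : ℝ} (hB : ∀ p, ∫ ω, W p ω ^ 2 ∂μ ≤ B) (hC : ∀ p, ∫ ω, W p ω ^ 4 ∂μ ≤ C)
    {d e : ℕ} {g₁ : Fin d → ℕ → ι} {g₂ : Fin e → ℕ → ι} (hg₁ : ∀ i, (g₁ i).Injective)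
    (hg₂ : ∀ k, (g₂ k).Injective) (hg : ∀ i k s t, g₁ i s ≠ g₂ k t) :
    ∀ᵐ ω ∂μ, Tendsto (empCorr (fun t i => W (g₁ i t) ω) (fun t k => W (g₂ k t) ω)) atTop
      (𝓝 0) := by
  have h : ∀ᵐ ω ∂μ, ∀ i k, Tendsto
      (fun T : ℕ => (T : ℝ)⁻¹ * ∑ t ∈ range T, W (g₁ i t) ω * W (g₂ k t) ω) atTop (𝓝 0) := by
    simp only [ae_all_iff]
    exact fun i k => ae_tendsto_avg_mul_of_iIndepFun hW hWm hW4 hW0 hB hC (hg₁ i) (hg₂ k) (hg i k)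
  filter_upwards [h] with ω hω
  exact tendsto_empCorr_zero hω

end Probability

theorem stmt_15_general {Ω : Type*} [MeasurableSpace Ω] (μ : Measure Ω) [IsProbabilityMeasure μ]
    (n m : ℕ) (σ : ℝ)
    (u : ℕ → Fin m → ℝ) (xo : ℕ → Fin n → ℝ)
    -- the two (jointly independent) noise families
    (v vt : ℕ → Ω → Fin n → ℝ)
    (hmeas : ∀ t i, Measurable fun ω => v t ω i)
    (hmeas' : ∀ t i, Measurable fun ω => vt t ω i)
    (hindep : iIndepFun
      (fun (p : (ℕ ⊕ ℕ) × Fin n) ω => Sum.elim (fun t => v t ω p.2) (fun t => vt t ω p.2) p.1) μ)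
    (hdist : ∀ t i, Measure.map (fun ω => v t ω i) μ
      = gaussianReal 0 ⟨σ ^ 2, sq_nonneg σ⟩)
    (hdist' : ∀ t i, Measure.map (fun ω => vt t ω i) μ
      = gaussianReal 0 ⟨σ ^ 2, sq_nonneg σ⟩)
    (Cu Cx : ℝ) (hu : ∀ t, ‖u t‖ ≤ Cu) (hx : ∀ t, ‖xo t‖ ≤ Cx)
    -- `X̄₀ⁱᵛ(T) = (1/T)·X₀(T)·(Φⁱᵛ(T))ᵀ` and `X̄₁ⁱᵛ(T) = (1/T)·X₁(T)·(Φⁱᵛ(T))ᵀ`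
    (X₀ivbar X₁ivbar : ℕ → Ω → Matrix (Fin n) (Fin m ⊕ Fin n) ℝ)
    (hX₀ivbar : ∀ T ω, X₀ivbar T ω =
      (T : ℝ)⁻¹ • (colMat (fun t => xo t + v t ω) T
        * (fromRows (colMat u T) (colMat (fun t => xo t + vt t ω) T))ᵀ))
    (hX₁ivbar : ∀ T ω, X₁ivbar T ω =
      (T : ℝ)⁻¹ • (colMat (fun t => xo (t + 1) + v (t + 1) ω) T
        * (fromRows (colMat u T) (colMat (fun t => xo t + vt t ω) T))ᵀ))
    -- noise-free matrices `X̄₀ᵒ(T)` and `X̄₁ᵒ(T)`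
    (X₀obar X₁obar : ℕ → Matrix (Fin n) (Fin m ⊕ Fin n) ℝ)
    (hX₀obar : ∀ T, X₀obar T
      = (T : ℝ)⁻¹ • (colMat xo T * (fromRows (colMat u T) (colMat xo T))ᵀ))
    (hX₁obar : ∀ T, X₁obar T
      = (T : ℝ)⁻¹ • (colMat (fun t => xo (t + 1)) T
          * (fromRows (colMat u T) (colMat xo T))ᵀ)) :
    ∀ᵐ ω ∂μ,
      Tendsto (fun T : ℕ => X₀ivbar T ω - X₀obar T) atTop
        (nhds (0 : Matrix (Fin n) (Fin m ⊕ Fin n) ℝ)) ∧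
      Tendsto (fun T : ℕ => X₁ivbar T ω - X₁obar T) atTop
        (nhds (0 : Matrix (Fin n) (Fin m ⊕ Fin n) ℝ)) := by
  set W : (ℕ ⊕ ℕ) × Fin n → Ω → ℝ :=
    fun p ω => Sum.elim (fun t => v t ω p.2) (fun t => vt t ω p.2) p.1
  have hWm (p) : Measurable (W p) := by
    rcases p with ⟨t | t, i⟩
    exacts [hmeas t i, hmeas' t i]
  have hWlaw (p) : μ.map (W p) = gaussianReal 0 ⟨σ ^ 2, sq_nonneg σ⟩ := by
    rcases p with ⟨t | t, i⟩
    exacts [hdist t i, hdist' t i]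
  have hW4 (p) : MemLp (W p) 4 μ :=
    (memLp_map_measure_iff aestronglyMeasurable_id (hWm p).aemeasurable).1
      (hWlaw p ▸ memLp_id_gaussianReal' 4 (by simp))
  have hmoment (p) (k : ℕ) :
      ∫ ω, W p ω ^ k ∂μ = ∫ x, x ^ k ∂gaussianReal 0 ⟨σ ^ 2, sq_nonneg σ⟩ := by
    rw [← hWlaw p, integral_map (hWm p).aemeasurable (by fun_prop)]
  have hW0 (p) : ∫ ω, W p ω ∂μ = 0 := by
    have h := hmoment p 1
    simp only [pow_one] at h
    exact h.trans integral_id_gaussianReal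
  have key (s : ℕ) : ∀ᵐ ω ∂μ, Tendsto (fun T : ℕ =>
      (T : ℝ)⁻¹ • (colMat (fun t => xo (t + s) + v (t + s) ω) T
        * (fromRows (colMat u T) (colMat (fun t => xo t + vt t ω) T))ᵀ)
      - (T : ℝ)⁻¹ • (colMat (fun t => xo (t + s)) T
        * (fromRows (colMat u T) (colMat xo T))ᵀ)) atTop (𝓝 0) := by
    have hinl (i : Fin n) : (fun t => ((Sum.inl (t + s), i) : (ℕ ⊕ ℕ) × Fin n)).Injective :=
      fun a b h => by simpa using h
    have hinr (k : Fin n) : (fun t => ((Sum.inr t, k) : (ℕ ⊕ ℕ) × Fin n)).Injective :=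
      fun a b h => by simpa using h
    have hB (p) := (hmoment p 2).le
    have hC (p) := (hmoment p 4).le
    filter_upwards [ae_tendsto_empCorr_left_of_iIndepFun hindep hWm hW4 hW0 hB hC hinl hu,
      ae_tendsto_empCorr_right_of_iIndepFun hindep hWm hW4 hW0 hB hC hinr (fun t => hx (t + s)),
      ae_tendsto_empCorr_left_of_iIndepFun hindep hWm hW4 hW0 hB hC hinl hx,
      ae_tendsto_empCorr_of_iIndepFun hindep hWm hW4 hW0 hB hC hinl hinr (by simp)]
      with ω hvu hxvt hvx hvvt
    have h := hvu.matrix_fromCols ((hxvt.add hvx).add hvvt)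
    rw [add_zero, add_zero, fromCols_zero] at h
    simp only [smul_colMat_mul_fromRows_sub]
    exact h
  filter_upwards [key 0, key 1] with ω h₀ h₁
  simp only [hX₀ivbar, hX₀obar, hX₁ivbar, hX₁obar]
  exact ⟨by simpa using h₀, h₁⟩

/-- Section IV-B: almost-sure consistency of the instrumental-variable matrices. -/
theorem stmt_15 {Ω : Type*} [MeasurableSpace Ω] (μ : Measure Ω) [IsProbabilityMeasure μ]
    (n m : ℕ) (σ : ℝ) (hσ : 0 < σ)
    (u : ℕ → Fin m → ℝ) (xo : ℕ → Fin n → ℝ)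
    -- the two (jointly independent) noise families
    (v vt : ℕ → Ω → Fin n → ℝ)
    (hmeas : ∀ t i, Measurable fun ω => v t ω i)
    (hmeas' : ∀ t i, Measurable fun ω => vt t ω i)
    (hindep : iIndepFun
      (fun (p : (ℕ ⊕ ℕ) × Fin n) ω => Sum.elim (fun t => v t ω p.2) (fun t => vt t ω p.2) p.1) μ)
    (hdist : ∀ t i, Measure.map (fun ω => v t ω i) μ
      = gaussianReal 0 ⟨σ ^ 2, sq_nonneg σ⟩)
    (hdist' : ∀ t i, Measure.map (fun ω => vt t ω i) μ
      = gaussianReal 0 ⟨σ ^ 2, sq_nonneg σ⟩)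
    (Cu Cx : ℝ) (hu : ∀ t, ‖u t‖ ≤ Cu) (hx : ∀ t, ‖xo t‖ ≤ Cx)
    -- `X̄₀ⁱᵛ(T) = (1/T)·X₀(T)·(Φⁱᵛ(T))ᵀ` and `X̄₁ⁱᵛ(T) = (1/T)·X₁(T)·(Φⁱᵛ(T))ᵀ`
    (X₀ivbar X₁ivbar : ℕ → Ω → Matrix (Fin n) (Fin m ⊕ Fin n) ℝ)
    (hX₀ivbar : ∀ T ω, X₀ivbar T ω =
      (T : ℝ)⁻¹ • (colMat (fun t => xo t + v t ω) T
        * (fromRows (colMat u T) (colMat (fun t => xo t + vt t ω) T))ᵀ))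
    (hX₁ivbar : ∀ T ω, X₁ivbar T ω =
      (T : ℝ)⁻¹ • (colMat (fun t => xo (t + 1) + v (t + 1) ω) T
        * (fromRows (colMat u T) (colMat (fun t => xo t + vt t ω) T))ᵀ))
    -- noise-free matrices `X̄₀ᵒ(T)` and `X̄₁ᵒ(T)`
    (X₀obar X₁obar : ℕ → Matrix (Fin n) (Fin m ⊕ Fin n) ℝ)
    (hX₀obar : ∀ T, X₀obar T
      = (T : ℝ)⁻¹ • (colMat xo T * (fromRows (colMat u T) (colMat xo T))ᵀ))
    (hX₁obar : ∀ T, X₁obar T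
      = (T : ℝ)⁻¹ • (colMat (fun t => xo (t + 1)) T
          * (fromRows (colMat u T) (colMat xo T))ᵀ)) :
    ∀ᵐ ω ∂μ,
      Tendsto (fun T : ℕ => X₀ivbar T ω - X₀obar T) atTop
        (nhds (0 : Matrix (Fin n) (Fin m ⊕ Fin n) ℝ)) ∧
      Tendsto (fun T : ℕ => X₁ivbar T ω - X₁obar T) atTop
        (nhds (0 : Matrix (Fin n) (Fin m ⊕ Fin n) ℝ)) :=
  stmt_15_general μ n m σ u xo v vt hmeas hmeas' hindep hdist hdist' Cu Cx hu hx X₀ivbar X₁ivbar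
    hX₀ivbar hX₁ivbar X₀obar X₁obar hX₀obar hX₁obar
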